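/- (Corollary 1.) Let Ξ ⊆ ℝ^{r−1} be a set of values of a parameter invariant under binomial subsampling, and for each ξ ∈ Ξ let M_ξ ∈ (0,∞]. For each ξ ∈ Ξ and μ ∈ (0, M_ξ) let f_{μ,ξ} be a probability mass function on ℕ with mean μ. Suppose the family is closed under binomial subsampling in the sense that T_p f_{μ,ξ} = f_{pμ,ξ} for all ξ ∈ Ξ, μ ∈ (0,M_ξ), p ∈ (0,1]. Then for each ξ ∈ Ξ there exists a real analytic function g(·, ξ) on (−2M_ξ, 0) such that Σ_n f_{μ,ξ}(n) t^n = g(μ(t−1), ξ) for all μ ∈ (0, M_ξ) and t ∈ (−1,1). Conversely, if the pgfs of the family have this form, the family is closed under binomial subsampling. -/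

import Mathlib

/-!
Thinning acts on generating functions by an affine change of variable: by the binomial theorem,
`Φ_{T_p f}(t) = Φ_f(1 + p(t - 1))`. Closure under thinning therefore says that
`Φ_{f_μ}(1 + x/μ)` does not depend on `μ` as long as `x ∈ (-2μ, 0)`; this common value is `g(x)`,
and near each point it is a power series with bounded coefficients composed with an affine map,
hence analytic. Conversely, if `Φ_{f_μ}(t) = g(μ(t - 1))` then `T_p f_μ` and `f_{pμ}` have the
same generating function on `(-1, 1)`, and a power series with bounded coefficients is determined
by its values near `0`.
-/

open scoped BigOperators ENNReal

/-- `f` is a probability mass function on `ℕ`. -/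
def IsPMF (f : ℕ → ℝ) : Prop := (∀ n, 0 ≤ f n) ∧ HasSum f 1

/-- The binomial subsampling (independent `p`-thinning) of `f`:
`(T_p f)(m) = ∑_{n ≥ m} f(n) * C(n,m) * p^m * (1-p)^(n-m)` (written with `n = m + k`). -/
noncomputable def thin (p : ℝ) (f : ℕ → ℝ) : ℕ → ℝ :=
  fun m => ∑' k : ℕ, f (m + k) * ((m + k).choose m : ℝ) * p ^ m * (1 - p) ^ k

/-- The interval `(-2M, 0)` of real numbers, where `0 < M ≤ ∞` is an extended real number. -/
def negIoo (M : ℝ≥0∞) : Set ℝ := {x : ℝ | x < 0 ∧ ENNReal.ofReal (-x) < 2 * M}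

open Set Topology Finset

noncomputable def pgf (f : ℕ → ℝ) (t : ℝ) : ℝ := ∑' n, f n * t ^ n

section Thinning

variable {f : ℕ → ℝ} {p : ℝ}

theorem sum_antidiagonal_thin_mul_pow (s : ℝ) (n : ℕ) :
    ∑ x ∈ antidiagonal n,
      f (x.1 + x.2) * ((x.1 + x.2).choose x.1 : ℝ) * p ^ x.1 * (1 - p) ^ x.2 * s ^ x.1
      = f n * (1 + p * (s - 1)) ^ n := by
  rw [show 1 + p * (s - 1) = p * s + (1 - p) by ring, (Commute.all _ _).add_pow', Finset.mul_sum]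
  refine Finset.sum_congr rfl fun x hx => ?_
  rw [mem_antidiagonal.mp hx, nsmul_eq_mul, mul_pow]
  ring

theorem hasSum_thin_mul_pow (hf : Summable f) (hp0 : 0 ≤ p) (hp1 : p ≤ 1) {t : ℝ}
    (ht : |t| ≤ 1) :
    HasSum (fun m => thin p f m * t ^ m) (∑' n, f n * (1 + p * (t - 1)) ^ n) := by
  have h1p : 0 ≤ 1 - p := by linarith
  let e := HasAntidiagonal.sigmaAntidiagonalEquivProd (A := ℕ)
  -- `G f t` is the double series behind both sides; `G |f| 1` dominates it.
  set G : (ℕ → ℝ) → ℝ → ℕ × ℕ → ℝ := fun g s x =>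
    g (x.1 + x.2) * ((x.1 + x.2).choose x.1 : ℝ) * p ^ x.1 * (1 - p) ^ x.2 * s ^ x.1
  have hfiber : ∀ g s n, HasSum (fun i : antidiagonal n => (G g s ∘ e) ⟨n, i⟩)
      (g n * (1 + p * (s - 1)) ^ n) := fun g s n => by
    convert hasSum_fintype _
    rw [← sum_antidiagonal_thin_mul_pow, ← Finset.sum_coe_sort]
    rfl
  have hbound_nonneg : ∀ x, 0 ≤ G (|f ·|) 1 x := fun x => by
    dsimp only [G]
    positivity
  have hbound : Summable (G (|f ·|) 1) := by
    rw [← e.summable_iff]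
    refine (summable_sigma_of_nonneg (f := G (|f ·|) 1 ∘ e) fun x => hbound_nonneg _).mpr
      ⟨fun n => (hfiber (|f ·|) 1 n).summable, ?_⟩
    exact hf.abs.congr fun n => ((hfiber (|f ·|) 1 n).tsum_eq.trans (by simp)).symm
  have hG : Summable (G f t) := hbound.of_norm_bounded fun x => by
    simp only [G, norm_mul, norm_pow, Real.norm_eq_abs, abs_of_nonneg hp0, abs_of_nonneg h1p,
      Nat.abs_cast, one_pow, mul_one]
    exact mul_le_of_le_one_right (by positivity) (pow_le_one₀ (abs_nonneg t) ht)
  have hsigma := (e.hasSum_iff.mpr hG.hasSum).sigma (hfiber f t)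
  rw [hsigma.tsum_eq]
  refine hG.hasSum.prod_fiberwise fun m => ?_
  rw [show thin p f m * t ^ m = ∑' k, G f t (m, k) from tsum_mul_right.symm]
  exact (hG.prod_factor m).hasSum

theorem pgf_thin (hf : Summable f) (hp0 : 0 ≤ p) (hp1 : p ≤ 1) {t : ℝ} (ht : |t| ≤ 1) :
    pgf (thin p f) t = pgf f (1 + p * (t - 1)) :=
  (hasSum_thin_mul_pow hf hp0 hp1 ht).tsum_eq

theorem IsPMF.thin (hf : IsPMF f) (hp0 : 0 ≤ p) (hp1 : p ≤ 1) : IsPMF (thin p f) := by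
  refine ⟨fun m => tsum_nonneg fun k => ?_, ?_⟩
  · have h1p : 0 ≤ 1 - p := by linarith
    have := hf.1 (m + k)
    positivity
  · simpa [hf.2.tsum_eq] using hasSum_thin_mul_pow hf.2.summable hp0 hp1 (t := 1) (by simp)

theorem IsPMF.abs_le_one (hf : IsPMF f) (n : ℕ) : |f n| ≤ 1 := by
  rw [abs_of_nonneg (hf.1 n)]
  exact le_hasSum hf.2 n fun j _ => hf.1 j

end Thinning

section PowerSeries

open FormalMultilinearSeries

variable {a b : ℕ → ℝ} {C : ℝ}

theorem hasFPowerSeriesOnBall_pgf (ha : ∀ n, |a n| ≤ C) :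
    HasFPowerSeriesOnBall (pgf a) (ofScalars ℝ a) 0 1 := by
  have hrad : 1 ≤ (ofScalars ℝ a).radius :=
    (ofScalars ℝ a).le_radius_of_bound C fun n => by simpa [ofScalars_norm] using ha n
  have hsum : (ofScalars ℝ a).sum = pgf a := by
    rw [← ofScalarsSum, ofScalarsSum_eq_tsum]
    rfl
  simpa [hsum] using
    ((ofScalars ℝ a).hasFPowerSeriesOnBall (one_pos.trans_le hrad)).mono one_pos hrad

theorem analyticAt_pgf (ha : ∀ n, |a n| ≤ C) {t : ℝ} (ht : |t| < 1) : AnalyticAt ℝ (pgf a) t :=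
  (hasFPowerSeriesOnBall_pgf ha).analyticAt_of_mem <| by
    simpa [edist_dist, Real.dist_eq] using ENNReal.ofReal_lt_one.mpr ht

theorem eq_of_pgf_eventuallyEq (ha : ∀ n, |a n| ≤ C) (hb : ∀ n, |b n| ≤ C)
    (h : pgf a =ᶠ[𝓝 0] pgf b) : a = b :=
  (ofScalars_series_eq_iff (E := ℝ) a b).mp <|
    (hasFPowerSeriesOnBall_pgf ha).hasFPowerSeriesAt.eq_formalMultilinearSeries_of_eventually
      (hasFPowerSeriesOnBall_pgf hb).hasFPowerSeriesAt h

end PowerSeries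

theorem exists_mean_of_mem_negIoo {M : ℝ≥0∞} {x : ℝ} (hx : x ∈ negIoo M) :
    ∃ μ : ℝ, 0 < μ ∧ ENNReal.ofReal μ < M ∧ -x < 2 * μ := by
  obtain ⟨hx0, hxM⟩ := hx
  have : ENNReal.ofReal (-x / 2) < M := by
    rw [ENNReal.ofReal_div_of_pos two_pos, ENNReal.ofReal_ofNat]
    exact ENNReal.div_lt_of_lt_mul' hxM
  obtain ⟨μ, -, hxμ, hμM⟩ := ENNReal.lt_iff_exists_real_btwn.mp this
  have hxμ' : -x / 2 < μ := (ENNReal.ofReal_lt_ofReal_iff_of_nonneg (by linarith)).mp hxμ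
  exact ⟨μ, by linarith, hμM, by linarith⟩

theorem mem_negIoo_of_mem_Ioo {M : ℝ≥0∞} {μ : ℝ} (hμM : ENNReal.ofReal μ < M) {x : ℝ}
    (hx : x ∈ Ioo (-(2 * μ)) 0) : x ∈ negIoo M := by
  refine ⟨hx.2, ?_⟩
  calc ENNReal.ofReal (-x) < ENNReal.ofReal (2 * μ) :=
        (ENNReal.ofReal_lt_ofReal_iff (by linarith [hx.1, hx.2])).mpr (by linarith [hx.1])
    _ = 2 * ENNReal.ofReal μ := by rw [ENNReal.ofReal_mul zero_le_two, ENNReal.ofReal_ofNat]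
    _ < 2 * M := (ENNReal.mul_lt_mul_iff_right two_ne_zero ENNReal.ofNat_ne_top).mpr hμM

theorem one_add_div_mem_Ioo {μ x : ℝ} (hμ : 0 < μ) (hx : x ∈ Ioo (-(2 * μ)) 0) :
    1 + x / μ ∈ Ioo (-1 : ℝ) 1 := by
  have hlow : -2 < x / μ := by rw [lt_div_iff₀ hμ]; linarith [hx.1]
  have hupp : x / μ < 0 := div_neg_of_neg_of_pos hx.2 hμ
  constructor <;> linarith

def ThinClosed (M : ℝ≥0∞) (F : ℝ → ℕ → ℝ) : Prop :=
  ∀ μ : ℝ, 0 < μ → ENNReal.ofReal μ < M → ∀ p ∈ Ioc (0 : ℝ) 1, thin p (F μ) = F (p * μ)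

section Family

variable {M : ℝ≥0∞} {F : ℝ → ℕ → ℝ}

theorem ThinClosed.pgf_comp_eq (hcl : ThinClosed M F)
    (hpmf : ∀ μ : ℝ, 0 < μ → ENNReal.ofReal μ < M → IsPMF (F μ))
    {μ ν : ℝ} (hμ : 0 < μ) (hμM : ENNReal.ofReal μ < M) (hν : 0 < ν) (hνM : ENNReal.ofReal ν < M)
    {x : ℝ} (hxμ : x ∈ Ioo (-(2 * μ)) 0) (hxν : x ∈ Ioo (-(2 * ν)) 0) :
    pgf (F μ) (1 + x / μ) = pgf (F ν) (1 + x / ν) := by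
  wlog hμν : μ ≤ ν generalizing μ ν
  · exact (this hν hνM hμ hμM hxν hxμ (le_of_not_ge hμν)).symm
  have hp : μ / ν ∈ Ioc (0 : ℝ) 1 := ⟨div_pos hμ hν, (div_le_one hν).mpr hμν⟩
  have ht : |1 + x / μ| ≤ 1 := (abs_lt.mpr (one_add_div_mem_Ioo hμ hxμ)).le
  calc pgf (F μ) (1 + x / μ) = pgf (thin (μ / ν) (F ν)) (1 + x / μ) := by
        rw [hcl ν hν hνM _ hp, div_mul_cancel₀ μ hν.ne']
    _ = pgf (F ν) (1 + x / ν) := by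
        rw [pgf_thin (hpmf ν hν hνM).2.summable hp.1.le hp.2 ht]
        congr 1
        field_simp
        ring

theorem exists_analyticOnNhd_of_thinClosed
    (hpmf : ∀ μ : ℝ, 0 < μ → ENNReal.ofReal μ < M → IsPMF (F μ))
    (hcl : ThinClosed M F) :
    ∃ g : ℝ → ℝ, AnalyticOnNhd ℝ g (negIoo M) ∧
      ∀ μ : ℝ, 0 < μ → ENNReal.ofReal μ < M → ∀ t ∈ Ioo (-1 : ℝ) 1,
        pgf (F μ) t = g (μ * (t - 1)) := by
  choose! μ hμ hμM hxμ using fun x (hx : x ∈ negIoo M) => exists_mean_of_mem_negIoo hx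
  have hg : ∀ x ∈ negIoo M, ∀ ν, 0 < ν → ENNReal.ofReal ν < M → x ∈ Ioo (-(2 * ν)) 0 →
      pgf (F (μ x)) (1 + x / μ x) = pgf (F ν) (1 + x / ν) := fun x hx ν hν hνM hxν =>
    hcl.pgf_comp_eq hpmf (hμ x hx) (hμM x hx) hν hνM ⟨by linarith [hxμ x hx], hx.1⟩ hxν
  refine ⟨fun x => pgf (F (μ x)) (1 + x / μ x), fun x₀ hx₀ => ?_, fun ν hν hνM t ht => ?_⟩
  · have hν := hμ x₀ hx₀
    have hνM := hμM x₀ hx₀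
    have hx₀ν : x₀ ∈ Ioo (-(2 * μ x₀)) 0 := ⟨by linarith [hxμ x₀ hx₀], hx₀.1⟩
    have han : AnalyticAt ℝ (fun x => pgf (F (μ x₀)) (1 + x / μ x₀)) x₀ :=
      AnalyticAt.comp (f := fun x => 1 + x / μ x₀) (analyticAt_pgf (hpmf _ hν hνM).abs_le_one
        (abs_lt.mpr (one_add_div_mem_Ioo hν hx₀ν))) (by fun_prop)
    refine han.congr (Filter.eventually_of_mem (Ioo_mem_nhds hx₀ν.1 hx₀ν.2) fun x hx => ?_)
    exact (hg x (mem_negIoo_of_mem_Ioo hνM hx) _ hν hνM hx).symm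
  · have hx : ν * (t - 1) ∈ Ioo (-(2 * ν)) 0 :=
      ⟨by nlinarith [ht.1], mul_neg_of_pos_of_neg hν (by linarith [ht.2])⟩
    simp only [hg _ (mem_negIoo_of_mem_Ioo hνM hx) ν hν hνM hx, mul_div_cancel_left₀ _ hν.ne',
      add_sub_cancel]

theorem thinClosed_of_pgf_eq (hpmf : ∀ μ : ℝ, 0 < μ → ENNReal.ofReal μ < M → IsPMF (F μ))
    {g : ℝ → ℝ} (hg : ∀ μ : ℝ, 0 < μ → ENNReal.ofReal μ < M → ∀ t ∈ Ioo (-1 : ℝ) 1,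
      pgf (F μ) t = g (μ * (t - 1))) :
    ThinClosed M F := by
  intro μ hμ hμM p hp
  have hpμ : 0 < p * μ := mul_pos hp.1 hμ
  have hpμM : ENNReal.ofReal (p * μ) < M :=
    (ENNReal.ofReal_le_ofReal (mul_le_of_le_one_left hμ.le hp.2)).trans_lt hμM
  refine eq_of_pgf_eventuallyEq ((hpmf μ hμ hμM).thin hp.1.le hp.2).abs_le_one
    (hpmf _ hpμ hpμM).abs_le_one
    (Filter.eventually_of_mem (Ioo_mem_nhds (show (-1 : ℝ) < 0 by norm_num) one_pos) fun t ht => ?_)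
  have hpt : 1 + p * (t - 1) ∈ Ioo (-1 : ℝ) 1 :=
    ⟨by nlinarith [ht.1, hp.1, hp.2], by nlinarith [ht.2, hp.1]⟩
  rw [pgf_thin (hpmf μ hμ hμM).2.summable hp.1.le hp.2 (abs_le.mpr ⟨ht.1.le, ht.2.le⟩),
    hg μ hμ hμM _ hpt, hg _ hpμ hpμM t ht]
  ring_nf

theorem thinClosed_iff_exists_analyticOnNhd
    (hpmf : ∀ μ : ℝ, 0 < μ → ENNReal.ofReal μ < M → IsPMF (F μ)) :
    ThinClosed M F ↔
      ∃ g : ℝ → ℝ, AnalyticOnNhd ℝ g (negIoo M) ∧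
        ∀ μ : ℝ, 0 < μ → ENNReal.ofReal μ < M → ∀ t ∈ Ioo (-1 : ℝ) 1,
          pgf (F μ) t = g (μ * (t - 1)) :=
  ⟨exists_analyticOnNhd_of_thinClosed hpmf, fun ⟨_, _, hg⟩ => thinClosed_of_pgf_eq hpmf hg⟩

end Family

theorem corollary1_general (r : ℕ) (Ξ : Set (Fin (r - 1) → ℝ))
    (M : (Fin (r - 1) → ℝ) → ℝ≥0∞)
    (f : (Fin (r - 1) → ℝ) → ℝ → ℕ → ℝ)
    (hpmf : ∀ ξ ∈ Ξ, ∀ μ : ℝ, 0 < μ → ENNReal.ofReal μ < M ξ → IsPMF (f ξ μ)) :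
    (∀ ξ ∈ Ξ, ∀ μ : ℝ, 0 < μ → ENNReal.ofReal μ < M ξ →
        ∀ p ∈ Set.Ioc (0 : ℝ) 1, thin p (f ξ μ) = f ξ (p * μ)) ↔
    (∀ ξ ∈ Ξ, ∃ g : ℝ → ℝ, AnalyticOnNhd ℝ g (negIoo (M ξ)) ∧
        ∀ μ : ℝ, 0 < μ → ENNReal.ofReal μ < M ξ →
          ∀ t ∈ Set.Ioo (-1 : ℝ) 1, ∑' n : ℕ, f ξ μ n * t ^ n = g (μ * (t - 1))) :=
  forall₂_congr fun ξ hξ => thinClosed_iff_exists_analyticOnNhd (hpmf ξ hξ)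

/-- Corollary 1: a family of pmfs `f_{μ,ξ}` on `ℕ` with mean `μ`, indexed by
`ξ ∈ Ξ ⊆ ℝ^{r-1}` (a parameter invariant under binomial subsampling) and
`μ ∈ (0, M_ξ)`, is closed under binomial subsampling (`T_p f_{μ,ξ} = f_{pμ,ξ}`) if and
only if for each `ξ` its pgfs have the form `g(μ(t-1), ξ)` for a real analytic function
`g(·, ξ)` on `(-2M_ξ, 0)`. -/
theorem corollary1 (r : ℕ) (hr : 1 ≤ r) (Ξ : Set (Fin (r - 1) → ℝ))
    (M : (Fin (r - 1) → ℝ) → ℝ≥0∞) (hM : ∀ ξ ∈ Ξ, 0 < M ξ)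
    (f : (Fin (r - 1) → ℝ) → ℝ → ℕ → ℝ)
    (hpmf : ∀ ξ ∈ Ξ, ∀ μ : ℝ, 0 < μ → ENNReal.ofReal μ < M ξ → IsPMF (f ξ μ))
    (hmean : ∀ ξ ∈ Ξ, ∀ μ : ℝ, 0 < μ → ENNReal.ofReal μ < M ξ →
      HasSum (fun n : ℕ => (n : ℝ) * f ξ μ n) μ) :
    (∀ ξ ∈ Ξ, ∀ μ : ℝ, 0 < μ → ENNReal.ofReal μ < M ξ →
        ∀ p ∈ Set.Ioc (0 : ℝ) 1, thin p (f ξ μ) = f ξ (p * μ)) ↔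
    (∀ ξ ∈ Ξ, ∃ g : ℝ → ℝ, AnalyticOnNhd ℝ g (negIoo (M ξ)) ∧
        ∀ μ : ℝ, 0 < μ → ENNReal.ofReal μ < M ξ →
          ∀ t ∈ Set.Ioo (-1 : ℝ) 1, ∑' n : ℕ, f ξ μ n * t ^ n = g (μ * (t - 1))) :=
  corollary1_general r Ξ M f hpmf
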